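/- arXiv:2603.29018 — 8 statements merged into one kernel-verified Lean document; each statement's English description precedes it below -/
import Mathlib

section
/- Let n ≥ 1, let x_0,…,x_n and a be points of ℝ^n, and let λ_0,…,λ_n ∈ ℝ satisfy Σ_{k=0}^n λ_k = 1 and a = Σ_{k=0}^n λ_k x_k. Set v_j := x_j − a and, for each i ∈ {0,…,n}, let B_i be the n×n real matrix whose columns are the vectors v_j for j ≠ i, in increasing order of j. Then for all i, j ∈ {0,…,n} with λ_i ≠ 0 and λ_j ≠ 0, det B_j = (λ_j / λ_i)·(−1)^{j−i}·det B_i. -/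
open Matrix


/-- The matrix `B_i` whose columns are the vectors `v_j = x_j − a` for `j ≠ i`,
in increasing order of `j`. -/
noncomputable def coneMatrix (n : ℕ) (x : Fin (n + 1) → (Fin n → ℝ)) (a : Fin n → ℝ)
    (i : Fin (n + 1)) : Matrix (Fin n) (Fin n) ℝ :=
  Matrix.of fun r c => (x (i.succAbove c) - a) r

lemma cramer_mulVec' {m : Type*} [DecidableEq m] [Fintype m]
    (A : Matrix m m ℝ) (y : m → ℝ) : cramer A (A *ᵥ y) = A.det • y := by
  rw [cramer_eq_adjugate_mulVec, mulVec_mulVec, adjugate_mul, smul_mulVec, one_mulVec]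

section aux
variable (n : ℕ) (x : Fin (n + 1) → (Fin n → ℝ)) (a : Fin n → ℝ)

noncomputable def Nmat (j : Fin (n + 1)) : Matrix (Fin (n + 1)) (Fin (n + 1)) ℝ :=
  Matrix.of (Fin.cons (Pi.single j 1) (fun r c => x c r - a r))

lemma det_Nmat (j : Fin (n + 1)) :
    (Nmat n x a j).det = (-1 : ℝ) ^ (j : ℕ) * (coneMatrix n x a j).det := by
  have hsub : (Nmat n x a j).submatrix Fin.succ j.succAbove = coneMatrix n x a j := by
    ext r c
    simp [Nmat, coneMatrix, Matrix.submatrix_apply]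
  rw [Matrix.det_succ_row_zero, Finset.sum_eq_single j]
  · have h0 : Nmat n x a j 0 j = 1 := by simp [Nmat]
    rw [h0, mul_one, hsub]
  · intro b _ hb
    have h0 : Nmat n x a j 0 b = 0 := by simp [Nmat, Pi.single_apply, hb.symm]
    simp [h0]
  · simp

lemma updateCol_det (j i : Fin (n + 1)) :
    ((Nmat n x a j).updateCol i (Pi.single 0 1)).det
      = (-1 : ℝ) ^ (i : ℕ) * (coneMatrix n x a i).det := by
  have hsub : ((Nmat n x a j).updateCol i (Pi.single 0 1)).submatrix
      (Fin.succAbove 0) i.succAbove = coneMatrix n x a i := by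
    ext r c
    have hne : i.succAbove c ≠ i := Fin.succAbove_ne i c
    simp [Matrix.updateCol_apply, hne, Nmat, coneMatrix, Fin.zero_succAbove]
  rw [Matrix.det_succ_column _ i, Finset.sum_eq_single 0]
  · have h0 : ((Nmat n x a j).updateCol i (Pi.single 0 1)) 0 i = 1 := by simp
    rw [h0, mul_one, hsub]
    simp
  · intro b _ hb
    have h0 : ((Nmat n x a j).updateCol i (Pi.single 0 1)) b i = 0 := by
      simp [Matrix.updateCol_apply, Pi.single_apply, hb]
    rw [h0, mul_zero, zero_mul]
  · simp
end aux

/-- the orientation lemma relating the determinants of the cone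
matrices `B_i` through the barycentric coordinates of the apex `a`. -/
theorem stmt7 (n : ℕ) (hn : 1 ≤ n) (x : Fin (n + 1) → (Fin n → ℝ)) (a : Fin n → ℝ)
    (lam : Fin (n + 1) → ℝ)
    (hsum : ∑ k, lam k = 1) (ha : a = ∑ k, lam k • x k)
    (i j : Fin (n + 1)) (hi : lam i ≠ 0) (hj : lam j ≠ 0) :
    (coneMatrix n x a j).det
      = (lam j / lam i) * (-1 : ℝ) ^ ((j : ℤ) - (i : ℤ)) * (coneMatrix n x a i).det := by
  have hmv : (Nmat n x a j) *ᵥ lam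
      = lam j • (Pi.single 0 1 : Fin (n + 1) → ℝ) := by
    ext r
    refine Fin.cases ?_ ?_ r
    · simp [Nmat, mulVec, dotProduct, Pi.single_apply, Finset.sum_ite_eq' Finset.univ j]
    · intro r'
      have haval : a r' = ∑ c, lam c * x c r' := by
        rw [ha]; simp [Finset.sum_apply]
      simp only [Nmat, mulVec, dotProduct, Matrix.of_apply, Fin.cons_succ, Pi.smul_apply,
        Pi.single_apply, smul_eq_mul]
      have hkey : ∑ c, (x c r' - a r') * lam c
          = (∑ c, lam c * x c r') - a r' * ∑ c, lam c := by
        rw [Finset.mul_sum, ← Finset.sum_sub_distrib]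
        congr 1; ext c; ring
      rw [hkey, hsum, haval]
      simp [Fin.succ_ne_zero]
  have hcr0 := cramer_mulVec' (Nmat n x a j) lam
  rw [hmv, LinearMap.map_smul] at hcr0
  have hcr := congrFun hcr0 i
  simp only [Pi.smul_apply, smul_eq_mul, Matrix.cramer_apply] at hcr
  rw [updateCol_det, det_Nmat] at hcr
  have hpj : ((-1 : ℝ) ^ (j : ℕ)) * ((-1 : ℝ) ^ (j : ℕ)) = 1 := by
    rw [← pow_add, ← two_mul, pow_mul]; norm_num
  have hz : (-1 : ℝ) ^ ((j : ℤ) - (i : ℤ)) = (-1 : ℝ) ^ (i : ℕ) * (-1 : ℝ) ^ (j : ℕ) := by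
    have h2 : ((-1 : ℝ)) ^ (2 * (i : ℤ)) = 1 := by
      rw [_root_.zpow_mul]; norm_num
    have h3 : ((-1 : ℝ)) ^ ((j : ℤ) - (i : ℤ)) * ((-1 : ℝ)) ^ (2 * (i : ℤ))
        = (-1 : ℝ) ^ ((i : ℤ) + (j : ℤ)) := by
      rw [← zpow_add₀ (by norm_num : (-1 : ℝ) ≠ 0)]
      congr 1; ring
    rw [h2, mul_one] at h3
    rw [h3, zpow_add₀ (by norm_num : (-1 : ℝ) ≠ 0), zpow_natCast, zpow_natCast]
  rw [hz]
  field_simp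
  linear_combination ((-1 : ℝ) ^ (j : ℕ)) * hcr.symm
    - ((coneMatrix n x a j).det * lam i) * hpj
end

section
/- Let x_0,…,x_n ∈ ℝ^n be affinely independent (so they span an n-simplex) and let a belong to the interior of the convex hull of {x_0,…,x_n}. For each i ∈ {0,…,n} define the infinite cone K_i := { a + Σ_{k≠i} s_k (x_k − a) : s_k ≥ 0 for all k ≠ i } ⊆ ℝ^n. Then ⋃_{i=0}^n K_i = ℝ^n. -/
/-!
Let `t` be the barycentric coordinates of the apex `a`; they are all positive, so the vectors
`x k - a` satisfy the positive relation `∑ t k • (x k - a) = 0`. Any `p - a` is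
`∑ c k • (x k - a)` with `c` the barycentric coordinates of `p`. Subtracting
`m • ∑ t k • (x k - a)` with `m = min_k c k / t k` makes every coefficient nonnegative and the
minimising one zero, so `p` lies in the cone over the facet opposite the minimiser.
-/

/-- The infinite cone `K_i = { a + Σ_{k≠i} s_k (x_k − a) : s_k ≥ 0 }` over the `i`-th
facet of the simplex `[x_0,…,x_n]`, with apex `a`. -/
def facetCone (n : ℕ) (x : Fin (n + 1) → (Fin n → ℝ)) (a : Fin n → ℝ)
    (i : Fin (n + 1)) : Set (Fin n → ℝ) :=
  { p | ∃ s : Fin (n + 1) → ℝ, (∀ k, k ≠ i → 0 ≤ s k) ∧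
      p = a + ∑ k ∈ Finset.univ.erase i, s k • (x k - a) }

theorem AffineBasis.sum_coord_smul_vsub {ι k V P : Type*} [Fintype ι] [Ring k]
    [AddCommGroup V] [Module k V] [AddTorsor V P] (b : AffineBasis ι k P) (p a : P) :
    ∑ i, b.coord i p • (b i -ᵥ a) = p -ᵥ a := by
  rw [← Finset.weightedVSubOfPoint_apply, eq_comm, ← eq_vadd_iff_vsub_eq,
    ← Finset.affineCombination_eq_weightedVSubOfPoint_vadd_of_sum_eq_one _ _ _
      (b.sum_coord_apply_eq_one p), b.affineCombination_coord_eq_self]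

theorem exists_nonneg_combination_of_sum_pos_smul_eq_zero {ι 𝕜 V : Type*} [Fintype ι]
    [Nonempty ι] [DecidableEq ι] [Field 𝕜] [LinearOrder 𝕜] [IsStrictOrderedRing 𝕜]
    [AddCommGroup V] [Module 𝕜 V] {v : ι → V} {t : ι → 𝕜} (ht : ∀ k, 0 < t k)
    (hv : ∑ k, t k • v k = 0) (c : ι → 𝕜) :
    ∃ i, ∃ s : ι → 𝕜, (∀ k, k ≠ i → 0 ≤ s k) ∧
      ∑ k, c k • v k = ∑ k ∈ Finset.univ.erase i, s k • v k := by
  obtain ⟨i, hi⟩ := Finite.exists_min fun k => c k / t k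
  set s : ι → 𝕜 := fun k => c k - c i / t i * t k
  have hs : ∀ k, 0 ≤ s k := fun k => by
    have := hi k
    rw [div_le_div_iff₀ (ht i) (ht k)] at this
    simp only [s, div_mul_eq_mul_div, sub_nonneg, div_le_iff₀ (ht i)]
    linarith
  have hsi : s i = 0 := by simp [s, (ht i).ne']
  refine ⟨i, s, fun k _ => hs k, ?_⟩
  rw [Finset.sum_erase _ (by rw [hsi, zero_smul])]
  simp only [s, sub_smul, Finset.sum_sub_distrib, mul_smul, ← Finset.smul_sum, hv, smul_zero,
    sub_zero]

/-- if `a` lies in the interior of the simplex `[x_0,…,x_n]`, the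
infinite cones over its facets cover all of `ℝ^n`. -/
theorem stmt8 (n : ℕ) (x : Fin (n + 1) → (Fin n → ℝ)) (a : Fin n → ℝ)
    (hx : AffineIndependent ℝ x)
    (ha : a ∈ interior (convexHull ℝ (Set.range x))) :
    (⋃ i, facetCone n x a i) = Set.univ := by
  classical
  let b : AffineBasis (Fin (n + 1)) ℝ (Fin n → ℝ) :=
    ⟨x, hx, by simp [hx.affineSpan_eq_top_iff_card_eq_finrank_add_one]⟩
  have hbx : ⇑b = x := rfl
  have hpos : ∀ k, 0 < b.coord k a := by
    rwa [← hbx, b.interior_convexHull] at ha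
  have hrel : ∑ k, b.coord k a • (x k - a) = 0 := by
    simpa [hbx] using b.sum_coord_smul_vsub a a
  refine Set.eq_univ_of_forall fun p => Set.mem_iUnion.2 ?_
  obtain ⟨i, s, hs, hsum⟩ :=
    exists_nonneg_combination_of_sum_pos_smul_eq_zero hpos hrel fun k => b.coord k p
  refine ⟨i, s, hs, ?_⟩
  have hp : ∑ k, b.coord k p • (x k - a) = p - a := by
    simpa [hbx] using b.sum_coord_smul_vsub p a
  rw [← hsum, hp, add_sub_cancel]
end

section
/- Let x_0,…,x_n ∈ ℝ^n be affinely independent and let a belong to the interior of the convex hull of {x_0,…,x_n}. For each i ∈ {0,…,n} define K_i := { a + Σ_{k≠i} s_k (x_k − a) : s_k ≥ 0 for all k ≠ i } ⊆ ℝ^n. Then for all i ≠ j, the intersection K_i ∩ K_j has Lebesgue measure zero in ℝ^n. -/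
open Finset MeasureTheory

/-- if `a` lies in the interior of the simplex `[x_0,…,x_n]`, any two
distinct facet cones intersect in a Lebesgue-null set. -/
theorem stmt9 (n : ℕ) (x : Fin (n + 1) → (Fin n → ℝ)) (a : Fin n → ℝ)
    (hx : AffineIndependent ℝ x)
    (ha : a ∈ interior (convexHull ℝ (Set.range x)))
    (i j : Fin (n + 1)) (hij : i ≠ j) :
    MeasureTheory.volume (facetCone n x a i ∩ facetCone n x a j) = 0 := by
  classical
  set v : Fin (n + 1) → (Fin n → ℝ) := fun k => x k - a with hvdef
  -- affine basis
  have hspan : affineSpan ℝ (Set.range x) = ⊤ := by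
    rw [hx.affineSpan_eq_top_iff_card_eq_finrank_add_one]
    simp
  let b : AffineBasis (Fin (n + 1)) ℝ (Fin n → ℝ) := ⟨x, hx, hspan⟩
  set t : Fin (n + 1) → ℝ := fun k => b.coord k a with htdef
  have hbx : (b : Fin (n + 1) → (Fin n → ℝ)) = x := rfl
  have ht_pos : ∀ k, 0 < t k := by
    have h := b.interior_convexHull
    rw [hbx] at h
    rw [h] at ha
    exact ha
  have ht_sum : ∑ k, t k = 1 := b.sum_coord_apply_eq_one a
  have ht_comb : ∑ k, t k • x k = a := by
    have := b.linear_combination_coord_eq_self a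
    rwa [hbx] at this
  -- key: every linear relation among the `v k` is a multiple of `t`
  have key : ∀ c : Fin (n + 1) → ℝ, ∑ k, c k • v k = 0 → ∀ k, c k = (∑ l, c l) * t k := by
    intro c hc k
    set C : ℝ := ∑ l, c l with hC
    have hw0 : ∑ l, (c l - C * t l) = 0 := by
      rw [Finset.sum_sub_distrib, ← Finset.mul_sum, ht_sum, mul_one, sub_self]
    have hw1 : ∑ l, (c l - C * t l) • x l = 0 := by
      have h1 : ∑ l, c l • x l - C • a = 0 := by
        rw [← hc]
        simp only [hvdef, smul_sub, Finset.sum_sub_distrib, ← Finset.sum_smul, hC]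
      have h2 : ∑ l, (C * t l) • x l = C • a := by
        simp only [mul_smul, ← Finset.smul_sum, ht_comb]
      simp only [sub_smul, Finset.sum_sub_distrib, h2]
      exact h1
    have h := affineIndependent_iff.mp hx Finset.univ (fun l => c l - C * t l) hw0 hw1 k
      (Finset.mem_univ k)
    have h' : c k - C * t k = 0 := h
    linarith
  -- the span of the vectors over the common (n-2)-face
  set F : Finset (Fin (n + 1)) := (Finset.univ.erase i).erase j with hF
  set S : Submodule ℝ (Fin n → ℝ) := Submodule.span ℝ (↑(F.image v) : Set (Fin n → ℝ)) with hS
  have hn : 0 < n := by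
    rcases Nat.eq_zero_or_pos n with h | h
    · exfalso
      have h1 := i.isLt
      have h2 := j.isLt
      exact hij (Fin.ext (by omega))
    · exact h
  have hScard : F.card = n - 1 := by
    rw [hF, Finset.card_erase_of_mem, Finset.card_erase_of_mem (Finset.mem_univ i)]
    · simp [Finset.card_univ]
    · exact Finset.mem_erase.mpr ⟨Ne.symm hij, Finset.mem_univ j⟩
  have hSne : S ≠ ⊤ := by
    intro hTop
    have h1 : Module.finrank ℝ S ≤ (F.image v).card := finrank_span_finset_le_card (F.image v)
    have h2 : (F.image v).card ≤ n - 1 := hScard ▸ Finset.card_image_le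
    have h3 : Module.finrank ℝ S = n := by
      rw [hTop, finrank_top, Module.finrank_fintype_fun_eq_card, Fintype.card_fin]
    omega
  -- inclusion into a translate of S
  have hsub : facetCone n x a i ∩ facetCone n x a j ⊆ (fun p => p - a) ⁻¹' (S : Set (Fin n → ℝ)) := by
    rintro p ⟨⟨s, hs, hps⟩, ⟨r, hr, hpr⟩⟩
    set s' : Fin (n + 1) → ℝ := Function.update s i 0 with hs'
    set r' : Fin (n + 1) → ℝ := Function.update r j 0 with hr'
    have hsum_s : ∑ k, s' k • v k = ∑ k ∈ Finset.univ.erase i, s k • v k := by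
      rw [← Finset.add_sum_erase _ _ (Finset.mem_univ i)]
      have h0 : s' i = 0 := Function.update_self i 0 s
      rw [h0, zero_smul, zero_add]
      exact Finset.sum_congr rfl fun k hk => by
        rw [hs', Function.update_of_ne (Finset.ne_of_mem_erase hk)]
    have hsum_r : ∑ k, r' k • v k = ∑ k ∈ Finset.univ.erase j, r k • v k := by
      rw [← Finset.add_sum_erase _ _ (Finset.mem_univ j)]
      have h0 : r' j = 0 := Function.update_self j 0 r
      rw [h0, zero_smul, zero_add]
      exact Finset.sum_congr rfl fun k hk => by
        rw [hr', Function.update_of_ne (Finset.ne_of_mem_erase hk)]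
    have heq : ∑ k, s' k • v k = ∑ k, r' k • v k := by
      rw [hsum_s, hsum_r]
      simp only [hvdef]
      exact add_left_cancel (hps.symm.trans hpr)
    have hrel : ∑ k, (s' k - r' k) • v k = 0 := by
      simp only [sub_smul, Finset.sum_sub_distrib, heq, sub_self]
    set C : ℝ := ∑ l, (s' l - r' l) with hCdef
    have hkey := key (fun k => s' k - r' k) hrel
    have hCle : C ≤ 0 := by
      have hci : s' i - r' i = C * t i := hkey i
      have hs'i : s' i = 0 := Function.update_self i 0 s
      have hr'i : r' i = r i := Function.update_of_ne hij 0 r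
      have hri : 0 ≤ r i := hr i hij
      by_contra hpos
      push_neg at hpos
      nlinarith [ht_pos i]
    have hCge : 0 ≤ C := by
      have hcj : s' j - r' j = C * t j := hkey j
      have hr'j : r' j = 0 := Function.update_self j 0 r
      have hs'j : s' j = s j := Function.update_of_ne (Ne.symm hij) 0 s
      have hsj : 0 ≤ s j := hs j (Ne.symm hij)
      by_contra hneg
      push_neg at hneg
      nlinarith [ht_pos j]
    have hC0 : C = 0 := le_antisymm hCle hCge
    have hsr : ∀ k, s' k = r' k := by
      intro k
      have h : s' k - r' k = C * t k := hkey k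
      rw [hC0] at h
      linarith
    have hs'j0 : s' j = 0 := by rw [hsr j]; exact Function.update_self j 0 r
    have hs'i0 : s' i = 0 := Function.update_self i 0 s
    -- p - a is a combination over F
    have hpa : p - a = ∑ k ∈ F, s' k • v k := by
      have h1 : p - a = ∑ k, s' k • v k := by
        rw [hsum_s]
        simp only [hvdef]
        rw [hps]
        abel
      rw [h1]
      refine (Finset.sum_subset (Finset.subset_univ F) ?_).symm
      intro k _ hk
      rw [hF] at hk
      simp only [Finset.mem_erase, Finset.mem_univ, and_true, not_and] at hk
      by_cases hkj : k = j
      · rw [hkj, hs'j0, zero_smul]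
      · have hki : k = i := by tauto
        rw [hki, hs'i0, zero_smul]
    show p - a ∈ S
    rw [hpa]
    exact Submodule.sum_mem S fun k hk =>
      Submodule.smul_mem S _ (Submodule.subset_span (by
        simp only [Finset.coe_image, Set.mem_image, Finset.mem_coe]
        exact ⟨k, hk, rfl⟩))
  refine measure_mono_null hsub ?_
  have : (fun p : Fin n → ℝ => p - a) = (fun p => p + (-a)) := by
    funext p; rw [sub_eq_add_neg]
  rw [this, measure_preimage_add_right]
  exact Measure.addHaar_submodule volume S hSne
end

section
/- Let n ≥ 1, let x_0,…,x_n, a ∈ ℝ^n, and let λ_0,…,λ_n ∈ ℝ satisfy Σ_k λ_k = 1 and a = Σ_k λ_k x_k. With v_j := x_j − a and B_i the n×n matrix whose columns are the vectors v_j for j ≠ i (in increasing order of j), the identity λ_j·(−1)^i·det B_i = λ_i·(−1)^j·det B_j holds for all i, j ∈ {0,…,n}. In particular, if λ_i λ_j > 0 then (−1)^i det B_i and (−1)^j det B_j have the same sign, while if λ_i λ_j < 0 they have opposite signs. -/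
private lemma sign_pos_mul (c x : ℝ) (hc : 0 < c) : Real.sign (c * x) = Real.sign x := by
  rcases lt_trichotomy x 0 with h | h | h
  · rw [Real.sign_of_neg h, Real.sign_of_neg (by nlinarith)]
  · simp [h]
  · rw [Real.sign_of_pos h, Real.sign_of_pos (by positivity)]

/-- the sign identity `λ_j (−1)^i det B_i = λ_i (−1)^j det B_j`, and its
consequences: the signed orientations `(−1)^i det B_i` agree in sign when
`λ_i λ_j > 0` and are opposite when `λ_i λ_j < 0`. -/
theorem stmt10 (n : ℕ) (hn : 1 ≤ n) (x : Fin (n + 1) → (Fin n → ℝ)) (a : Fin n → ℝ)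
    (lam : Fin (n + 1) → ℝ)
    (hsum : ∑ k, lam k = 1) (ha : a = ∑ k, lam k • x k) :
    (∀ i j : Fin (n + 1),
      lam j * (-1 : ℝ) ^ (i : ℕ) * (coneMatrix n x a i).det
        = lam i * (-1 : ℝ) ^ (j : ℕ) * (coneMatrix n x a j).det) ∧
    (∀ i j : Fin (n + 1), 0 < lam i * lam j →
      Real.sign ((-1 : ℝ) ^ (i : ℕ) * (coneMatrix n x a i).det)
        = Real.sign ((-1 : ℝ) ^ (j : ℕ) * (coneMatrix n x a j).det)) ∧
    (∀ i j : Fin (n + 1), lam i * lam j < 0 →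
      Real.sign ((-1 : ℝ) ^ (i : ℕ) * (coneMatrix n x a i).det)
        = -Real.sign ((-1 : ℝ) ^ (j : ℕ) * (coneMatrix n x a j).det)) := by
  have hv : ∀ r : Fin n, ∑ k, (x k - a) r * lam k = 0 := by
    intro r
    have h : ∑ k, lam k • (x k - a) = 0 := by
      have : ∑ k, lam k • (x k - a) = (∑ k, lam k • x k) - (∑ k, lam k) • a := by
        simp [smul_sub, Finset.sum_sub_distrib, Finset.sum_smul]
      rw [this, hsum, ← ha, one_smul, sub_self]
    have := congrFun h r
    simp only [Finset.sum_apply, Pi.smul_apply, smul_eq_mul, Pi.zero_apply] at this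
    rw [← this]
    exact Finset.sum_congr rfl fun k _ => mul_comm _ _
  have hlam : lam ≠ 0 := by
    intro h
    rw [h] at hsum
    simp at hsum
  set D : Fin (n + 1) → ℝ := fun k => (-1 : ℝ) ^ (k : ℕ) * (coneMatrix n x a k).det with hD
  have key : ∀ i j : Fin (n + 1), lam j * D i = lam i * D j := by
    intro i j
    set A : Matrix (Fin (n + 1)) (Fin (n + 1)) ℝ :=
      Matrix.of fun r k =>
        Fin.cases ((if k = i then lam j else 0) - (if k = j then lam i else 0))
          (fun r' => (x k - a) r') r with hA
    have hsub : ∀ k : Fin (n + 1), A.submatrix Fin.succ k.succAbove = coneMatrix n x a k := by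
      intro k
      ext r c
      simp [hA, coneMatrix, Matrix.submatrix]
    have hdet : A.det = lam j * D i - lam i * D j := by
      rw [Matrix.det_succ_row_zero]
      have step : ∀ k : Fin (n + 1),
          (-1 : ℝ) ^ (k : ℕ) * A 0 k * (A.submatrix Fin.succ k.succAbove).det
            = ((if k = i then lam j else 0) - (if k = j then lam i else 0)) * D k := by
        intro k
        rw [hsub k]
        simp only [hA, Matrix.of_apply, Fin.cases_zero, hD]
        ring
      rw [Finset.sum_congr rfl fun k _ => step k]
      simp [sub_mul, Finset.sum_sub_distrib, ite_mul]
    have hzero : A.det = 0 := by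
      rw [← Matrix.exists_mulVec_eq_zero_iff]
      refine ⟨lam, hlam, ?_⟩
      funext r
      refine Fin.cases ?_ ?_ r
      · simp only [Matrix.mulVec, dotProduct, hA, Matrix.of_apply, Fin.cases_zero,
          Pi.zero_apply]
        simp [sub_mul, mul_sub, ite_mul, mul_ite, Finset.sum_sub_distrib,
          Finset.sum_ite_eq', mul_comm]
      · intro r'
        simp only [Matrix.mulVec, dotProduct, hA, Matrix.of_apply, Fin.cases_succ,
          Pi.zero_apply]
        exact hv r'
    linarith [hdet, hzero]
  refine ⟨fun i j => by simpa only [hD, mul_assoc] using key i j, ?_, ?_⟩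
  · intro i j hij
    have hjne : lam j ≠ 0 := fun h => by simp [h] at hij
    have h1 : lam j ^ 2 * D i = (lam i * lam j) * D j := by
      linear_combination lam j * key i j
    have h2 : (0 : ℝ) < lam j ^ 2 := by positivity
    calc Real.sign (D i) = Real.sign (lam j ^ 2 * D i) := (sign_pos_mul _ _ h2).symm
      _ = Real.sign ((lam i * lam j) * D j) := by rw [h1]
      _ = Real.sign (D j) := sign_pos_mul _ _ hij
  · intro i j hij
    have hjne : lam j ≠ 0 := fun h => by simp [h] at hij
    have h1 : lam j ^ 2 * D i = -((-(lam i * lam j)) * D j) := by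
      linear_combination lam j * key i j
    have h2 : (0 : ℝ) < lam j ^ 2 := by positivity
    calc Real.sign (D i) = Real.sign (lam j ^ 2 * D i) := (sign_pos_mul _ _ h2).symm
      _ = Real.sign (-((-(lam i * lam j)) * D j)) := by rw [h1]
      _ = -Real.sign ((-(lam i * lam j)) * D j) := Real.sign_neg
      _ = -Real.sign (D j) := by rw [sign_pos_mul _ _ (by linarith)]
end

section
/- Let x_0,…,x_n ∈ ℝ^n be affinely independent, let a ∈ ℝ^n lie outside the convex hull of {x_0,…,x_n}, and let λ_0,…,λ_n be the (unique) barycentric coordinates of a, i.e. Σ_k λ_k = 1 and a = Σ_k λ_k x_k. Set I := { i : λ_i > 0 } and J := { j : λ_j < 0 }, and define K_i := { a + Σ_{k≠i} s_k (x_k − a) : s_k ≥ 0 for all k ≠ i }. Then ⋃_{i∈I} K_i = ⋃_{j∈J} K_j, and for every k with λ_k = 0 the cone K_k has Lebesgue measure zero in ℝ^n. -/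
open Finset MeasureTheory Pointwise

section Barycentric

variable {E ι : Type*} [AddCommGroup E] [Fintype ι] {x : ι → E} {a : E}

theorem sum_smul_sub_eq_zero_of_barycentric {R : Type*} [Ring R] [Module R E] {lam : ι → R}
    (hsum : ∑ k, lam k = 1) (hbary : a = ∑ k, lam k • x k) :
    ∑ k, lam k • (x k - a) = 0 := by
  simp only [smul_sub, sum_sub_distrib, ← sum_smul, hsum, one_smul, ← hbary, sub_self]

theorem exists_neg_of_notMem_convexHull {𝕜 : Type*} [Field 𝕜] [LinearOrder 𝕜]
    [IsStrictOrderedRing 𝕜] [Module 𝕜 E] {lam : ι → 𝕜} (hsum : ∑ k, lam k = 1)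
    (hbary : a = ∑ k, lam k • x k) (ha : a ∉ convexHull 𝕜 (Set.range x)) :
    ∃ j, lam j < 0 := by
  by_contra! hnonneg
  exact ha (hbary ▸ (convex_convexHull 𝕜 _).sum_mem (fun k _ => hnonneg k) hsum
    fun k _ => subset_convexHull 𝕜 _ (Set.mem_range_self k))

end Barycentric

def simplexCone (n : ℕ) (x : Fin (n + 1) → (Fin n → ℝ)) (a : Fin n → ℝ) :
    Set (Fin n → ℝ) :=
  { p | ∃ s : Fin (n + 1) → ℝ, (∀ k, 0 ≤ s k) ∧ p = a + ∑ k, s k • (x k - a) }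

section Cones

variable {n : ℕ} {x : Fin (n + 1) → (Fin n → ℝ)} {a : Fin n → ℝ}

theorem mem_facetCone_iff {i : Fin (n + 1)} {p : Fin n → ℝ} :
    p ∈ facetCone n x a i ↔
      ∃ s : Fin (n + 1) → ℝ, (∀ k, 0 ≤ s k) ∧ s i = 0 ∧ p = a + ∑ k, s k • (x k - a) := by
  constructor
  · rintro ⟨s, hs, rfl⟩
    refine ⟨Function.update s i 0, fun k => ?_, by simp, ?_⟩
    · rcases eq_or_ne k i with rfl | hk
      · simp
      · simpa [Function.update_of_ne hk] using hs k hk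
    · rw [← sum_erase univ (a := i) (by simp)]
      exact congrArg (a + ·) <| sum_congr rfl fun k hk => by
        rw [Function.update_of_ne (ne_of_mem_erase hk)]
  · rintro ⟨s, hs, hsi, rfl⟩
    exact ⟨s, fun k _ => hs k, by rw [sum_erase univ (by simp [hsi])]⟩

theorem facetCone_subset_simplexCone (i : Fin (n + 1)) :
    facetCone n x a i ⊆ simplexCone n x a := fun _ hp =>
  let ⟨s, hs, _, hp⟩ := mem_facetCone_iff.mp hp
  ⟨s, hs, hp⟩

theorem simplexCone_subset_iUnion_facetCone {μ : Fin (n + 1) → ℝ}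
    (hrel : ∑ k, μ k • (x k - a) = 0) (hneg : ∃ j, μ j < 0) :
    simplexCone n x a ⊆ ⋃ j ∈ {j | μ j < 0}, facetCone n x a j := by
  rintro p ⟨s, hs, rfl⟩
  obtain ⟨j, hjT, hjmin⟩ := (univ.filter fun k => μ k < 0).exists_min_image
    (fun k => s k / -μ k) (by simpa [Finset.Nonempty] using hneg)
  have hμj : μ j < 0 := (mem_filter.mp hjT).2
  set c := s j / -μ j
  have hc : 0 ≤ c := div_nonneg (hs j) (by linarith)
  have ht : ∀ k, 0 ≤ s k + c * μ k := fun k => by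
    rcases lt_or_ge (μ k) 0 with hk | hk
    · have : c ≤ s k / -μ k := hjmin k (by simp [hk])
      rw [le_div_iff₀ (by linarith)] at this
      linarith
    · nlinarith [hs k]
  have htj : s j + c * μ j = 0 := by
    simp only [c, div_neg, neg_mul, div_mul_cancel₀ _ hμj.ne, add_neg_cancel]
  have hshift : ∑ k, (s k + c * μ k) • (x k - a) = ∑ k, s k • (x k - a) := by
    simp only [add_smul, mul_smul, sum_add_distrib, ← smul_sum, hrel, smul_zero, add_zero]
  simp only [Set.mem_iUnion, Set.mem_ofPred_eq, exists_prop]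
  exact ⟨j, hμj, mem_facetCone_iff.mpr ⟨_, ht, htj, by rw [hshift]⟩⟩

theorem iUnion_facetCone_eq_simplexCone {μ : Fin (n + 1) → ℝ}
    (hrel : ∑ k, μ k • (x k - a) = 0) (hneg : ∃ j, μ j < 0) :
    ⋃ j ∈ {j | μ j < 0}, facetCone n x a j = simplexCone n x a :=
  (Set.iUnion₂_subset fun j _ => facetCone_subset_simplexCone j).antisymm
    (simplexCone_subset_iUnion_facetCone hrel hneg)

theorem facetCone_subset_vadd_span (k : Fin (n + 1)) :
    facetCone n x a k ⊆
      a +ᵥ (Submodule.span ℝ (Set.range fun m => x (k.succAbove m) - a) : Set (Fin n → ℝ)) := by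
  intro p hp
  obtain ⟨s, -, hsk, rfl⟩ := mem_facetCone_iff.mp hp
  rw [Fin.sum_univ_succAbove _ k, hsk, zero_smul, zero_add]
  exact Set.vadd_mem_vadd_set <| Submodule.sum_mem _ fun m _ =>
    Submodule.smul_mem _ _ (Submodule.subset_span ⟨m, rfl⟩)

theorem volume_facetCone_eq_zero {μ : Fin (n + 1) → ℝ} (hrel : ∑ k, μ k • (x k - a) = 0)
    {k j : Fin (n + 1)} (hk : μ k = 0) (hj : μ j ≠ 0) :
    volume (facetCone n x a k) = 0 := by
  set w : Fin n → Fin n → ℝ := fun m => x (k.succAbove m) - a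
  have hspan : Submodule.span ℝ (Set.range w) ≠ ⊤ := by
    intro htop
    have hli : LinearIndependent ℝ w :=
      linearIndependent_of_top_le_span_of_card_eq_finrank htop.ge
        (by rw [Fintype.card_fin, Module.finrank_fin_fun])
    have hrel' : ∑ m, μ (k.succAbove m) • w m = 0 := by
      rwa [Fin.sum_univ_succAbove _ k, hk, zero_smul, zero_add] at hrel
    obtain ⟨m, rfl⟩ := Fin.exists_succAbove_eq (x := j) (y := k) (by rintro rfl; exact hj hk)
    exact hj (Fintype.linearIndependent_iff.mp hli _ hrel' m)
  refine measure_mono_null (facetCone_subset_vadd_span k) ?_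
  rw [measure_vadd]
  exact Measure.addHaar_submodule volume _ hspan

end Cones

theorem stmt11_general (n : ℕ) (x : Fin (n + 1) → (Fin n → ℝ)) (a : Fin n → ℝ)
    (ha : a ∉ convexHull ℝ (Set.range x))
    (lam : Fin (n + 1) → ℝ)
    (hsum : ∑ k, lam k = 1) (hbary : a = ∑ k, lam k • x k) :
    (⋃ i ∈ {i : Fin (n + 1) | 0 < lam i}, facetCone n x a i)
      = (⋃ j ∈ {j : Fin (n + 1) | lam j < 0}, facetCone n x a j) ∧
    ∀ k : Fin (n + 1), lam k = 0 → MeasureTheory.volume (facetCone n x a k) = 0 := by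
  have hrel := sum_smul_sub_eq_zero_of_barycentric hsum hbary
  obtain ⟨j, hj⟩ := exists_neg_of_notMem_convexHull hsum hbary ha
  obtain ⟨i, -, hi⟩ := exists_lt_of_sum_lt (s := univ) (f := 0) (g := lam) (by simp [hsum])
  have hrel_neg : ∑ k, (-lam k) • (x k - a) = 0 := by
    simp only [neg_smul, sum_neg_distrib, hrel, neg_zero]
  refine ⟨?_, fun k hk => volume_facetCone_eq_zero hrel hk hj.ne⟩
  have hpos := iUnion_facetCone_eq_simplexCone hrel_neg ⟨i, neg_lt_zero.mpr hi⟩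
  simp only [neg_lt_zero] at hpos
  rw [hpos, iUnion_facetCone_eq_simplexCone hrel ⟨j, hj⟩]

/-- if the apex `a` lies outside the simplex `[x_0,…,x_n]`, the union
of the facet cones indexed by positive barycentric coordinates equals the union of
those indexed by negative barycentric coordinates, and cones corresponding to
vanishing barycentric coordinates are Lebesgue-null. -/
theorem stmt11 (n : ℕ) (x : Fin (n + 1) → (Fin n → ℝ)) (a : Fin n → ℝ)
    (hx : AffineIndependent ℝ x)
    (ha : a ∉ convexHull ℝ (Set.range x))
    (lam : Fin (n + 1) → ℝ)
    (hsum : ∑ k, lam k = 1) (hbary : a = ∑ k, lam k • x k) :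
    (⋃ i ∈ {i : Fin (n + 1) | 0 < lam i}, facetCone n x a i)
      = (⋃ j ∈ {j : Fin (n + 1) | lam j < 0}, facetCone n x a j) ∧
    ∀ k : Fin (n + 1), lam k = 0 → MeasureTheory.volume (facetCone n x a k) = 0 :=
  stmt11_general n x a ha lam hsum hbary
end

section
/- Let x_0,…,x_n ∈ ℝ^n be affinely independent, let a ∈ ℝ^n lie outside the convex hull of {x_0,…,x_n}, and let λ_0,…,λ_n be its barycentric coordinates (Σ_k λ_k = 1 and a = Σ_k λ_k x_k). Define K_i := { a + Σ_{k≠i} s_k (x_k − a) : s_k ≥ 0 for all k ≠ i } and I := { i : λ_i > 0 }. Then for all i ≠ j such that either both i, j ∈ I or both i, j ∉ I, the intersection K_i ∩ K_j has Lebesgue measure zero in ℝ^n. -/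
/-- if the apex `a` lies outside the simplex `[x_0,…,x_n]`, two distinct
facet cones whose indices lie both in `I = {i : λ_i > 0}` or both outside `I`
intersect in a Lebesgue-null set. -/
theorem stmt12 (n : ℕ) (x : Fin (n + 1) → (Fin n → ℝ)) (a : Fin n → ℝ)
    (hx : AffineIndependent ℝ x)
    (ha : a ∉ convexHull ℝ (Set.range x))
    (lam : Fin (n + 1) → ℝ)
    (hsum : ∑ k, lam k = 1) (hbary : a = ∑ k, lam k • x k)
    (i j : Fin (n + 1)) (hij : i ≠ j)
    (hIJ : (0 < lam i ∧ 0 < lam j) ∨ (¬ 0 < lam i ∧ ¬ 0 < lam j)) :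
    MeasureTheory.volume (facetCone n x a i ∩ facetCone n x a j) = 0 := by
  classical
  have hn : 1 ≤ n := by
    by_contra h
    push_neg at h
    interval_cases n
    · have h1 := i.isLt
      have h2 := j.isLt
      exact hij (Fin.ext (by omega))
  set v : Fin (n + 1) → (Fin n → ℝ) := fun k => x k - a with hv
  have hvlam : ∑ k, lam k • v k = 0 := by
    have h1 : ∑ k, lam k • v k = (∑ k, lam k • x k) - (∑ k, lam k) • a := by
      simp [hv, smul_sub, Finset.sum_sub_distrib, ← Finset.sum_smul]
    rw [h1, hsum, ← hbary, one_smul, sub_self]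
  set W : Submodule ℝ (Fin n → ℝ) :=
    Submodule.span ℝ (↑(Finset.image v ({i, j}ᶜ : Finset (Fin (n + 1))))) with hW
  have hWne : W ≠ ⊤ := by
    intro htop
    have h1 : Module.finrank ℝ W ≤ (Finset.image v ({i, j}ᶜ : Finset (Fin (n + 1)))).card :=
      finrank_span_finset_le_card _
    have h1' : (Finset.image v ({i, j}ᶜ : Finset (Fin (n + 1)))).card
        ≤ ({i, j}ᶜ : Finset (Fin (n + 1))).card := Finset.card_image_le
    have h2 : ({i, j}ᶜ : Finset (Fin (n + 1))).card = n - 1 := by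
      rw [Finset.card_compl, Finset.card_insert_of_notMem (by simp [hij]),
        Finset.card_singleton]
      simp
    have h3 : Module.finrank ℝ W = n := by
      rw [htop]
      rw [finrank_top]
      exact Module.finrank_fin_fun ℝ
    omega
  have hWnull : MeasureTheory.volume (W : Set (Fin n → ℝ)) = 0 :=
    MeasureTheory.Measure.addHaar_submodule _ W hWne
  -- key membership helper
  have key : ∀ u : Fin (n + 1) → ℝ, u i = 0 → u j = 0 → (∑ k, u k • v k) ∈ W := by
    intro u hui huj
    refine Submodule.sum_mem _ fun k _ => ?_
    by_cases hki : k = i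
    · simp [hki, hui]
    by_cases hkj : k = j
    · simp [hkj, huj]
    · refine Submodule.smul_mem _ _ (Submodule.subset_span ?_)
      rw [Finset.mem_coe, Finset.mem_image]
      exact ⟨k, Finset.mem_compl.2 (by simp [hki, hkj]), rfl⟩
  have hsub : facetCone n x a i ∩ facetCone n x a j
      ⊆ (fun p => -a + p) ⁻¹' (W : Set (Fin n → ℝ)) := by
    rintro p ⟨⟨s, hs, hps⟩, ⟨t, ht, hpt⟩⟩
    set s' : Fin (n + 1) → ℝ := fun k => if k = i then 0 else s k with hs'
    set t' : Fin (n + 1) → ℝ := fun k => if k = j then 0 else t k with ht'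
    have hps' : p - a = ∑ k, s' k • v k := by
      rw [← Finset.sum_erase (a := i) Finset.univ (f := fun k => s' k • v k) (by simp [hs'])]
      rw [hps]
      rw [add_sub_cancel_left]
      refine Finset.sum_congr rfl fun k hk => ?_
      have hki : k ≠ i := Finset.ne_of_mem_erase hk
      rw [hv]
      simp only [hs', if_neg hki]
    have hpt' : p - a = ∑ k, t' k • v k := by
      rw [← Finset.sum_erase (a := j) Finset.univ (f := fun k => t' k • v k) (by simp [ht'])]
      rw [hpt]
      rw [add_sub_cancel_left]
      refine Finset.sum_congr rfl fun k hk => ?_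
      have hkj : k ≠ j := Finset.ne_of_mem_erase hk
      rw [hv]
      simp only [ht', if_neg hkj]
    set c : ℝ := ∑ k, (s' k - t' k) with hc
    have heq : ∀ k, s' k - t' k = c * lam k := by
      have hesum : ∑ k, (s' k - t' k - c * lam k) = 0 := by
        rw [Finset.sum_sub_distrib, ← Finset.mul_sum, hsum, ← hc]
        ring
      have hev : ∑ k, (s' k - t' k - c * lam k) • x k = 0 := by
        have hx1 : ∀ k : Fin (n + 1),
            (s' k - t' k - c * lam k) • x k
              = (s' k • v k - t' k • v k - (c * lam k) • v k)
                + (s' k - t' k - c * lam k) • a := by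
          intro k
          simp [hv, sub_smul, smul_sub]
          abel
        rw [Finset.sum_congr rfl fun k _ => hx1 k, Finset.sum_add_distrib,
          ← Finset.sum_smul, hesum, zero_smul, add_zero]
        have : ∀ k : Fin (n+1), (c * lam k) • v k = c • (lam k • v k) := by
          intro k; rw [mul_smul]
        simp only [Finset.sum_sub_distrib, ← hps', ← hpt', this, ← Finset.smul_sum, hvlam,
          smul_zero, sub_self, sub_zero]
      intro k
      have h0 : s' k - t' k - c * lam k = 0 := affineIndependent_iff.1 hx Finset.univ
        (fun k => s' k - t' k - c * lam k) hesum hev k (Finset.mem_univ k)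
      linarith
    have hci : c * lam i ≤ 0 := by
      have h := heq i
      have hsi : s' i = 0 := by simp [hs']
      have hti : t' i = t i := by simp [ht', hij]
      have hti0 : 0 ≤ t i := ht i hij
      rw [hsi, hti] at h
      linarith
    have hcj : 0 ≤ c * lam j := by
      have h := heq j
      have htj : t' j = 0 := by simp [ht']
      have hsj : s' j = s j := by simp [hs', hij.symm]
      have hsj0 : 0 ≤ s j := hs j (Ne.symm hij)
      rw [htj, hsj] at h
      linarith
    have hsj' : s' j = c * lam j := by
      have h := heq j
      have htj : t' j = 0 := by simp [ht']
      rw [htj] at h; linarith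
    have hti' : t' i = -(c * lam i) := by
      have h := heq i
      have hsi : s' i = 0 := by simp [hs']
      rw [hsi] at h; linarith
    have hmem : p - a ∈ W := by
      rcases hIJ with ⟨hli, hlj⟩ | ⟨hli, hlj⟩
      · -- both positive: c = 0
        have hc1 : c ≤ 0 := by nlinarith
        have hc2 : 0 ≤ c := by nlinarith
        have hc0 : c = 0 := le_antisymm hc1 hc2
        rw [hps']
        exact key s' (by simp [hs']) (by rw [hsj', hc0, zero_mul])
      · push_neg at hli hlj
        rcases eq_or_lt_of_le hlj with hlj0 | hlj0
        · -- lam j = 0 : s' j = 0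
          rw [hps']
          exact key s' (by simp [hs']) (by rw [hsj', hlj0, mul_zero])
        · -- lam j < 0 : c ≤ 0
          have hc1 : c ≤ 0 := by nlinarith
          rcases eq_or_lt_of_le hli with hli0 | hli0
          · -- lam i = 0 : t' i = 0
            rw [hpt']
            exact key t' (by rw [hti', hli0, mul_zero, neg_zero]) (by simp [ht'])
          · -- lam i < 0 : c ≥ 0, so c = 0
            have hc2 : 0 ≤ c := by nlinarith
            have hc0 : c = 0 := le_antisymm hc1 hc2
            rw [hps']
            exact key s' (by simp [hs']) (by rw [hsj', hc0, zero_mul])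
    show -a + p ∈ (W : Set (Fin n → ℝ))
    rwa [neg_add_eq_sub]
  refine MeasureTheory.measure_mono_null hsub ?_
  rw [MeasureTheory.measure_preimage_add]
  exact hWnull
end

section
/- Let x_0,…,x_n ∈ ℝ^n be affinely independent and positively oriented, i.e. det[x_1 − x_0, …, x_n − x_0] > 0. Let a ∈ ℝ^n have barycentric coordinates λ_0,…,λ_n (Σ_k λ_k = 1, a = Σ_k λ_k x_k) satisfying λ_i ≠ 0 for every i. With v_j := x_j − a, B_i the n×n matrix with columns v_j for j ≠ i (in increasing order of j), and K_i := { a + Σ_{k≠i} s_k v_k : s_k ≥ 0 }, the following holds for every Lebesgue-integrable f : ℝ^n → ℝ: Σ_{i=0}^n (−1)^i · sign(det B_i) · ∫_{K_i} f dx equals ∫_{ℝ^n} f dx if a lies in the convex hull of {x_0,…,x_n}, and equals 0 otherwise. -/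
/-!
Write `μ k y` for the barycentric coordinates of `y` with respect to the simplex, so that
`λ k = μ k a`, and put `t k = μ k y / λ k`. A point `y` lies in `K_i` exactly when
`λ k (t k - t i) ≥ 0` for all `k ≠ i`. Off finitely many hyperplanes the `t k` are pairwise
distinct and these inequalities are strict, so `y ∈ K_i` says that `t i` lies above every `t k`
with `λ k < 0` and below every `t k` with `λ k > 0`. Only the smallest `t` among the positive `λ` and the largest among
the negative `λ` qualify, and either both or neither do, so `∑ sign (λ i) 1_{K_i}(y)` is `1` when
all `λ k > 0` and `0` otherwise. For the signs, `det B_i = (-1)^i λ_i det [x_1 - x_0, …, x_n - x_0]`: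
in the matrix of homogeneous coordinates `(1, x k)`, replacing the row `(1, x i)` by
`(1, a) = ∑ λ k (1, x k)` multiplies the determinant by `λ i`, and a cyclic shift of `i + 1` rows
brings `(1, a)` to the top.
-/

open MeasureTheory Classical

namespace Matrix

variable {R : Type*} [CommRing R] {n : ℕ}

def edgeMatrix (z : Fin (n + 1) → Fin n → R) : Matrix (Fin n) (Fin n) R :=
  Matrix.of fun r c => (z c.succ - z 0) r

def homogeneousMatrix (z : Fin (n + 1) → Fin n → R) : Matrix (Fin (n + 1)) (Fin (n + 1)) R :=
  Matrix.of fun k => Fin.cons 1 (z k)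

theorem det_homogeneousMatrix (z : Fin (n + 1) → Fin n → R) :
    (homogeneousMatrix z).det = (edgeMatrix z).det := by
  let B : Matrix (Fin (n + 1)) (Fin (n + 1)) R :=
    Matrix.of fun k => Fin.cases (Fin.cons 1 (z 0)) (fun j => Fin.cons 0 (z j.succ - z 0)) k
  have hB : (homogeneousMatrix z).det = B.det := by
    refine det_eq_of_forall_row_eq_smul_add_const (fun k => if k = 0 then 0 else 1) 0 rfl ?_
    intro k j
    cases k using Fin.cases <;> cases j using Fin.cases <;> simp [homogeneousMatrix, B]
  have hminor : B.submatrix Fin.succ Fin.succ = (edgeMatrix z)ᵀ := by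
    ext k r
    simp [B, edgeMatrix]
  rw [hB, det_succ_column_zero, Fin.sum_univ_succ, Finset.sum_eq_zero (fun j _ => by simp [B])]
  simp [B, hminor]

end Matrix

open Matrix in
theorem neg_one_pow_mul_det_coneMatrix {n : ℕ} {x : Fin (n + 1) → Fin n → ℝ} {a : Fin n → ℝ}
    {lam : Fin (n + 1) → ℝ} (hsum : ∑ k, lam k = 1) (hbary : a = ∑ k, lam k • x k)
    (i : Fin (n + 1)) :
    (-1) ^ (i : ℕ) * (coneMatrix n x a i).det = lam i * (edgeMatrix x).det := by
  have hrow : (Fin.cons 1 a : Fin (n + 1) → ℝ) = ∑ k, lam k • homogeneousMatrix x k := by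
    ext j
    cases j using Fin.cases <;> simp [homogeneousMatrix, Finset.sum_apply, hsum, hbary]
  have hperm : (homogeneousMatrix x).updateRow i (Fin.cons 1 a)
      = (homogeneousMatrix (Fin.cons a (x ∘ i.succAbove))).submatrix (Fin.cycleRange i) id := by
    ext k j
    rcases eq_or_ne k i with rfl | hk
    · simp [homogeneousMatrix]
    · obtain ⟨c, rfl⟩ := Fin.exists_succAbove_eq hk
      simp [homogeneousMatrix]
  have hcone : coneMatrix n x a i = edgeMatrix (Fin.cons a (x ∘ i.succAbove)) := by
    ext r c
    simp [coneMatrix, edgeMatrix]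
  calc (-1) ^ (i : ℕ) * (coneMatrix n x a i).det
      = ((homogeneousMatrix x).updateRow i (Fin.cons 1 a)).det := by
        rw [hperm, det_permute, Fin.sign_cycleRange, det_homogeneousMatrix, hcone]
        simp
    _ = lam i * (edgeMatrix x).det := by
        rw [hrow, det_updateRow_sum, det_homogeneousMatrix, smul_eq_mul]

theorem Real.sign_mul_of_pos_right {c d : ℝ} (hd : 0 < d) : Real.sign (c * d) = Real.sign c := by
  rcases lt_trichotomy c 0 with hc | rfl | hc
  · rw [Real.sign_of_neg hc, Real.sign_of_neg (mul_neg_of_neg_of_pos hc hd)]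
  · simp
  · rw [Real.sign_of_pos hc, Real.sign_of_pos (mul_pos hc hd)]

theorem Real.neg_one_pow_mul_sign (m : ℕ) (c : ℝ) :
    (-1) ^ m * Real.sign c = Real.sign ((-1) ^ m * c) := by
  rcases neg_one_pow_eq_or ℝ m with h | h <;> simp [h, Real.sign_neg]

theorem exists_affineBasis_coe_eq_of_det_edgeMatrix_ne_zero {n : ℕ}
    {x : Fin (n + 1) → Fin n → ℝ} (h : (Matrix.edgeMatrix x).det ≠ 0) :
    ∃ b : AffineBasis (Fin (n + 1)) ℝ (Fin n → ℝ), ⇑b = x := by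
  have hind : AffineIndependent ℝ x := by
    rw [affineIndependent_iff_linearIndependent_vsub ℝ x 0]
    refine (linearIndependent_equiv' (finSuccAboveEquiv 0) ?_).mp
      (Matrix.linearIndependent_cols_of_det_ne_zero h)
    ext c r
    simp [Matrix.edgeMatrix, finSuccAboveEquiv_apply]
  exact ⟨⟨x, hind, hind.affineSpan_eq_top_iff_card_eq_finrank_add_one.mpr (by simp)⟩, rfl⟩

section SeparatesBySign

variable {ι : Type*} {lam t : ι → ℝ}

def SeparatesBySign (lam t : ι → ℝ) (i : ι) : Prop :=
  ∀ k, k ≠ i → 0 < lam k * (t k - t i)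

theorem separatesBySign_neg {i : ι} : SeparatesBySign (-lam) (-t) i ↔ SeparatesBySign lam t i := by
  have h : ∀ k, (-lam) k * ((-t) k - (-t) i) = lam k * (t k - t i) := fun k => by
    simp only [Pi.neg_apply]; ring
  simp only [SeparatesBySign, h]

theorem SeparatesBySign.lt_of_pos {i k : ι} (h : SeparatesBySign lam t i) (hk : 0 < lam k)
    (hki : k ≠ i) : t i < t k :=
  sub_pos.mp (pos_of_mul_pos_right (h k hki) hk.le)

theorem separatesBySign_iff_of_isLeast (hlam : ∀ k, lam k ≠ 0) (ht : Function.Injective t)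
    {i : ι} (hi : 0 < lam i) (hmin : ∀ k, 0 < lam k → t i ≤ t k) :
    SeparatesBySign lam t i ↔ ∀ k, lam k < 0 → t k < t i := by
  refine ⟨fun h k hk => ?_, fun h k hki => ?_⟩
  · have hki : k ≠ i := by rintro rfl; linarith
    exact sub_neg.mp (neg_of_mul_pos_right (h k hki) hk.le)
  · rcases (hlam k).lt_or_gt with hk | hk
    · exact mul_pos_of_neg_of_neg hk (sub_neg.mpr (h k hk))
    · exact mul_pos hk (sub_pos.mpr ((hmin k hk).lt_of_ne (ht.ne hki.symm)))

theorem sum_filter_pos_ite_separatesBySign [Fintype ι] {j : ι} (hj : 0 < lam j)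
    (hmin : ∀ k, 0 < lam k → t j ≤ t k) :
    ∑ i with 0 < lam i, (if SeparatesBySign lam t i then 1 else 0 : ℝ)
      = if SeparatesBySign lam t j then 1 else 0 := by
  refine Finset.sum_eq_single_of_mem j (by simpa using hj) fun i hi hij => if_neg fun h => ?_
  exact (hmin i (by simpa using hi)).not_gt (h.lt_of_pos hj (Ne.symm hij))

theorem sum_sign_mul_separatesBySign [Fintype ι] (hlam : ∀ k, lam k ≠ 0) (hpos : ∃ k, 0 < lam k)
    (ht : Function.Injective t) :
    ∑ i, Real.sign (lam i) * (if SeparatesBySign lam t i then 1 else 0)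
      = if ∀ k, 0 < lam k then 1 else 0 := by
  -- the indices with `lam i < 0` are the positive ones for `(-lam, -t)`
  have hsplit : ∑ i, Real.sign (lam i) * (if SeparatesBySign lam t i then 1 else 0)
      = ∑ i with 0 < lam i, (if SeparatesBySign lam t i then 1 else 0 : ℝ)
        - ∑ i with 0 < (-lam) i, (if SeparatesBySign (-lam) (-t) i then 1 else 0 : ℝ) := by
    simp only [Finset.sum_filter, Pi.neg_apply, neg_pos, separatesBySign_neg,
      ← Finset.sum_sub_distrib]
    refine Finset.sum_congr rfl fun i _ => ?_
    rcases (hlam i).lt_or_gt with hi | hi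
    · rw [if_neg hi.not_gt, if_pos hi, Real.sign_of_neg hi]; ring
    · rw [if_pos hi, if_neg hi.not_gt, Real.sign_of_pos hi]; ring
  obtain ⟨iP, hiP, hminP⟩ := Finset.exists_min_image {k | 0 < lam k} t
    (by simpa [Finset.Nonempty] using hpos)
  simp only [Finset.mem_filter, Finset.mem_univ, true_and] at hiP hminP
  rw [hsplit, sum_filter_pos_ite_separatesBySign hiP hminP]
  by_cases hall : ∀ k, 0 < lam k
  · have hsep : SeparatesBySign lam t iP :=
      (separatesBySign_iff_of_isLeast hlam ht hiP hminP).mpr fun k hk => absurd (hall k) hk.not_gt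
    simp [hsep, hall, Finset.filter_false_of_mem fun k _ => (hall k).not_gt]
  · have hneg : ∃ k, lam k < 0 := by
      push Not at hall
      obtain ⟨k, hk⟩ := hall
      exact ⟨k, hk.lt_of_ne (hlam k)⟩
    obtain ⟨iN, hiN, hmaxN⟩ := Finset.exists_max_image {k | lam k < 0} t
      (by simpa [Finset.Nonempty] using hneg)
    simp only [Finset.mem_filter, Finset.mem_univ, true_and] at hiN hmaxN
    have hlam' : ∀ k, (-lam) k ≠ 0 := fun k => neg_ne_zero.mpr (hlam k)
    rw [sum_filter_pos_ite_separatesBySign (j := iN) (by simpa using hiN) (by simpa using hmaxN),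
      separatesBySign_iff_of_isLeast hlam ht hiP hminP,
      separatesBySign_iff_of_isLeast (t := -t) hlam' (neg_injective.comp ht) (by simpa using hiN)
        (by simpa using hmaxN), if_neg hall]
    have hP : (∀ k, lam k < 0 → t k < t iP) ↔ t iN < t iP :=
      ⟨fun h => h iN hiN, fun h k hk => (hmaxN k hk).trans_lt h⟩
    have hN : (∀ k, 0 < lam k → -t k < -t iN) ↔ t iN < t iP := by
      simp only [neg_lt_neg_iff]
      exact ⟨fun h => h iP hiP, fun h k hk => h.trans_le (hminP k hk)⟩
    simp only [Pi.neg_apply, neg_lt_zero, hP, hN, sub_self]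

end SeparatesBySign

namespace AffineBasis

variable {ι V : Type*} [DecidableEq ι] [AddCommGroup V] [Module ℝ V] (b : AffineBasis ι ℝ V)

theorem coord_add_sum_smul_sub (a : V) (s : ι → ℝ) (t : Finset ι) (j : ι) :
    b.coord j (a + ∑ k ∈ t, s k • (b k - a))
      = (1 - ∑ k ∈ t, s k) * b.coord j a + if j ∈ t then s j else 0 := by
  have hlin : ∀ v, b.coord j (a + v) = b.coord j a + (b.coord j).linear v := fun v => by
    rw [add_comm, ← vadd_eq_add, AffineMap.map_vadd, vadd_eq_add, add_comm]
  have hedge : ∀ k, (b.coord j).linear (b k - a) = (if j = k then 1 else 0) - b.coord j a :=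
    fun k => by rw [← vsub_eq_sub, AffineMap.linearMap_vsub, coord_apply, vsub_eq_sub]
  simp only [hlin, map_sum, map_smul, hedge, smul_eq_mul, mul_sub, Finset.sum_sub_distrib,
    mul_ite, mul_one, mul_zero, Finset.sum_ite_eq, ← Finset.sum_mul]
  ring

theorem exists_eq_add_sum_smul_sub_iff [Fintype ι] {a : V} {i : ι} (hi : b.coord i a ≠ 0)
    (y : V) :
    (∃ s : ι → ℝ, (∀ k, k ≠ i → 0 ≤ s k) ∧ y = a + ∑ k ∈ Finset.univ.erase i, s k • (b k - a))
      ↔ ∀ k, k ≠ i → 0 ≤ b.coord k y - b.coord i y / b.coord i a * b.coord k a := by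
  constructor
  · rintro ⟨s, hs, rfl⟩ k hk
    rw [coord_add_sum_smul_sub, coord_add_sum_smul_sub]
    simpa [hk, hi] using hs k hk
  · intro h
    set q := b.coord i y / b.coord i a
    refine ⟨fun k => b.coord k y - q * b.coord k a, h, b.ext_elem fun j => ?_⟩
    have hS : ∑ k ∈ Finset.univ.erase i, (b.coord k y - q * b.coord k a) = 1 - q := by
      rw [Finset.sum_erase _ (by simp [q, hi]), Finset.sum_sub_distrib, ← Finset.mul_sum,
        sum_coord_apply_eq_one, sum_coord_apply_eq_one, mul_one]
    rw [coord_add_sum_smul_sub, hS]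
    by_cases hj : j = i
    · subst hj
      simp [q, hi]
    · simp [hj]

end AffineBasis

theorem MeasureTheory.Measure.addHaar_setOf_affineMap_eq_zero {E : Type*} [NormedAddCommGroup E]
    [NormedSpace ℝ E] [MeasurableSpace E] [BorelSpace E] [FiniteDimensional ℝ E] (μ : Measure E)
    [μ.IsAddHaarMeasure] (f : E →ᵃ[ℝ] ℝ) {p : E} (hp : f p ≠ 0) : μ {y | f y = 0} = 0 := by
  have hzero : {y | f y = 0} = ((affineSpan ℝ {(0 : ℝ)}).comap f : Set E) := by
    ext y; simp
  rw [hzero]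
  refine addHaar_affineSubspace μ _ fun htop => hp ?_
  simpa using (htop ▸ AffineSubspace.mem_top ℝ E p : p ∈ (affineSpan ℝ {(0 : ℝ)}).comap f)

namespace AffineBasis

variable {ι E : Type*} [Fintype ι] [NormedAddCommGroup E] [NormedSpace ℝ E] [MeasurableSpace E]
  [BorelSpace E] [FiniteDimensional ℝ E]

theorem ae_coord_mul_ne (b : AffineBasis ι ℝ E) {a : E} (ha : ∀ i, b.coord i a ≠ 0)
    (μ : Measure E) [μ.IsAddHaarMeasure] :
    ∀ᵐ y ∂μ, ∀ i k, i ≠ k → b.coord i a * b.coord k y ≠ b.coord k a * b.coord i y := by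
  simp only [ae_all_iff]
  intro i k hik
  let f : E →ᵃ[ℝ] ℝ := b.coord i a • b.coord k - b.coord k a • b.coord i
  have hf : f (b k) ≠ 0 := by simpa [f, coord_apply_ne b hik] using ha i
  filter_upwards [measure_eq_zero_iff_ae_notMem.mp (μ.addHaar_setOf_affineMap_eq_zero f hf)]
    with y hy
  simpa [f, sub_eq_zero] using hy

end AffineBasis

theorem MeasureTheory.sum_mul_setIntegral_eq_of_ae_sum_indicator {α ι : Type*} [MeasurableSpace α]
    {μ : Measure α} [Fintype ι] {K : ι → Set α} (hK : ∀ i, MeasurableSet (K i)) {c : ι → ℝ}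
    {C : ℝ} (h : ∀ᵐ y ∂μ, ∑ i, (K i).indicator (fun _ => c i) y = C) {f : α → ℝ}
    (hf : Integrable f μ) :
    ∑ i, c i * ∫ y in K i, f y ∂μ = C * ∫ y, f y ∂μ := by
  calc ∑ i, c i * ∫ y in K i, f y ∂μ
      = ∑ i, ∫ y, (K i).indicator (fun y => c i * f y) y ∂μ := by
        simp only [integral_indicator (hK _), integral_const_mul]
    _ = ∫ y, (∑ i, (K i).indicator (fun _ => c i) y) * f y ∂μ := by
        rw [← integral_finsetSum _ fun i _ => (hf.const_mul _).indicator (hK i)]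
        simp only [Finset.sum_mul, Set.indicator_mul_left]
    _ = ∫ y, C * f y ∂μ := integral_congr_ae (by filter_upwards [h] with y hy; rw [hy])
    _ = C * ∫ y, f y ∂μ := integral_const_mul C f

section FacetCone

variable {n : ℕ} (b : AffineBasis (Fin (n + 1)) ℝ (Fin n → ℝ)) {a : Fin n → ℝ}

theorem facetCone_eq {i : Fin (n + 1)} (hi : b.coord i a ≠ 0) :
    facetCone n b a i
      = {y | ∀ k, k ≠ i → 0 ≤ b.coord k y - b.coord i y / b.coord i a * b.coord k a} :=
  Set.ext (b.exists_eq_add_sum_smul_sub_iff hi)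

theorem measurableSet_facetCone {i : Fin (n + 1)} (hi : b.coord i a ≠ 0) :
    MeasurableSet (facetCone n b a i) := by
  rw [facetCone_eq b hi]
  refine IsClosed.measurableSet ?_
  simp only [Set.ofPred_forall]
  have hc := continuous_barycentric_coord b
  exact isClosed_iInter fun k => isClosed_iInter fun _ => isClosed_le continuous_const
    ((hc k).sub (((hc i).div_const _).mul continuous_const))

theorem mem_facetCone_iff_separatesBySign (ha : ∀ i, b.coord i a ≠ 0) {y : Fin n → ℝ}
    (hy : ∀ i k, i ≠ k → b.coord i a * b.coord k y ≠ b.coord k a * b.coord i y) (i : Fin (n + 1)) :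
    y ∈ facetCone n b a i
      ↔ SeparatesBySign (b.coord · a) (fun k => b.coord k y / b.coord k a) i := by
  rw [facetCone_eq b (ha i)]
  refine forall_congr' fun k => imp_congr_right fun hk => ?_
  have heq : b.coord k a * (b.coord k y / b.coord k a - b.coord i y / b.coord i a)
      = b.coord k y - b.coord i y / b.coord i a * b.coord k a := by
    field_simp [ha k]
  have hne : b.coord k y - b.coord i y / b.coord i a * b.coord k a ≠ 0 := by
    intro h
    field_simp [ha i] at h
    exact hy i k (Ne.symm hk) (by linarith)
  rw [heq]
  exact ⟨fun h => h.lt_of_ne hne.symm, le_of_lt⟩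

theorem ae_sum_indicator_facetCone (ha : ∀ i, b.coord i a ≠ 0) :
    ∀ᵐ y, ∑ i, (facetCone n b a i).indicator (fun _ => Real.sign (b.coord i a)) y
      = if ∀ k, 0 < b.coord k a then 1 else 0 := by
  filter_upwards [b.ae_coord_mul_ne ha volume] with y hy
  have hpos : ∃ k, 0 < b.coord k a := by
    by_contra! h
    have := Finset.sum_nonpos fun k (_ : k ∈ Finset.univ) => h k
    rw [b.sum_coord_apply_eq_one] at this
    linarith
  have ht : Function.Injective fun k => b.coord k y / b.coord k a := by
    intro i k hik
    by_contra hne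
    refine hy i k hne ?_
    field_simp [ha i, ha k] at hik
    linarith
  convert sum_sign_mul_separatesBySign ha hpos ht using 2 with i
  simp only [Set.indicator_apply, mem_facetCone_iff_separatesBySign b ha hy, mul_ite, mul_one,
    mul_zero]

end FacetCone

/-- for a positively oriented simplex `[x_0,…,x_n]` and an apex `a`
with all barycentric coordinates nonzero, the signed sum of the integrals of an
integrable function over the infinite facet cones equals `∫ f` if `a` lies in the
simplex and `0` otherwise. -/
theorem stmt13 (n : ℕ) (x : Fin (n + 1) → (Fin n → ℝ)) (a : Fin n → ℝ)
    (hdet : 0 < (Matrix.of fun r c : Fin n => (x c.succ - x 0) r).det)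
    (lam : Fin (n + 1) → ℝ)
    (hsum : ∑ k, lam k = 1) (hbary : a = ∑ k, lam k • x k)
    (hlam : ∀ i, lam i ≠ 0)
    (f : (Fin n → ℝ) → ℝ) (hf : Integrable f) :
    ∑ i : Fin (n + 1),
        (-1 : ℝ) ^ (i : ℕ) * Real.sign (coneMatrix n x a i).det
          * ∫ y in facetCone n x a i, f y
      = if a ∈ convexHull ℝ (Set.range x) then ∫ y, f y else 0 := by
  have hsign : ∀ i : Fin (n + 1),
      (-1) ^ (i : ℕ) * Real.sign (coneMatrix n x a i).det = Real.sign (lam i) := fun i => by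
    rw [Real.neg_one_pow_mul_sign, neg_one_pow_mul_det_coneMatrix hsum hbary,
      Real.sign_mul_of_pos_right (d := (Matrix.edgeMatrix x).det) hdet]
  obtain ⟨b, rfl⟩ := exists_affineBasis_coe_eq_of_det_edgeMatrix_ne_zero hdet.ne'
  obtain rfl : lam = fun k => b.coord k a := by
    ext k
    rw [hbary, ← Finset.univ.affineCombination_eq_linear_combination _ _ hsum,
      b.coord_apply_combination_of_mem (Finset.mem_univ k) hsum]
  have hhull : a ∈ convexHull ℝ (Set.range b) ↔ ∀ k, 0 < b.coord k a := by
    rw [b.convexHull_eq_nonneg_coord]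
    exact forall_congr' fun k => (hlam k).symm.le_iff_lt
  simp only [hsign]
  rw [sum_mul_setIntegral_eq_of_ae_sum_indicator (fun i => measurableSet_facetCone b (hlam i))
    (ae_sum_indicator_facetCone b hlam) hf, hhull]
  split_ifs <;> simp
end

section
/- Let x_0,…,x_n ∈ ℝ^n be affinely independent and positively oriented, i.e. det[x_1 − x_0, …, x_n − x_0] > 0, and let a ∈ ℝ^n be arbitrary. With v_j := x_j − a and B_i the n×n matrix with columns v_j for j ≠ i (in increasing order of j), let T_i denote the convex hull of {a} ∪ {x_k : k ≠ i} and let T denote the convex hull of {x_0,…,x_n}. Then for every Lebesgue-integrable f : ℝ^n → ℝ, Σ_{i=0}^n (−1)^i · sign(det B_i) · ∫_{T_i} f dx = ∫_T f dx. -/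
/-!
Work in barycentric coordinates `λ(y)` with respect to the simplex `T`, and let `α = λ(a)`.
Replacing the row of `x_i` by that of `a = ∑ α_j x_j` in the homogeneous-coordinate matrix
shows `det B_i = (-1)^i α_i det[x_1 - x_0, …, x_n - x_0]`, so the `i`-th coefficient is `sign α_i`.
A point `y` lies in `T_i` iff `λ(y) - μ α` is nonnegative and vanishes at `i` for some `μ ≥ 0`.
The feasible `μ` form a bounded interval (some `α_k > 0`). For generic `y`, no index is tight
if it is empty; otherwise exactly one index is tight at its upper end, where `α_i > 0`, and exactly
one at its lower end, where `α_i < 0`, unless that end is `0`, i.e. unless `y ∈ T`.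
Hence `∑ sign α_i 1_{T_i} = 1_T` off a finite union of hyperplanes; integrate against `f`.
-/

open MeasureTheory Finset

theorem Real.sign_mul_of_pos {a d : ℝ} (hd : 0 < d) : Real.sign (a * d) = Real.sign a := by
  rcases lt_trichotomy a 0 with h | rfl | h
  · rw [sign_of_neg (mul_neg_of_neg_of_pos h hd), sign_of_neg h]
  · simp
  · rw [sign_of_pos (mul_pos h hd), sign_of_pos h]

theorem Real.neg_one_pow_mul_sign_neg_one_pow_mul (k : ℕ) (a : ℝ) :
    (-1) ^ k * Real.sign ((-1) ^ k * a) = Real.sign a := by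
  rcases neg_one_pow_eq_or ℝ k with h | h <;> simp [h, sign_neg]

theorem Real.sign_mul_boole (a : ℝ) (P : Prop) [Decidable P] :
    Real.sign a * (if P then 1 else 0)
      = (if 0 < a ∧ P then 1 else 0) - (if a < 0 ∧ P then 1 else 0) := by
  by_cases hP : P
  · rcases lt_trichotomy a 0 with h | rfl | h
    · simp [hP, h, h.not_gt, sign_of_neg]
    · simp
    · simp [hP, h, h.not_gt, sign_of_pos]
  · simp [hP]

theorem sum_boole_eq_ite_exists {ι : Type*} [Fintype ι] {P : ι → Prop} [DecidablePred P]
    (hP : ∀ i j, P i → P j → i = j) :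
    ∑ i, (if P i then (1 : ℝ) else 0) = if ∃ i, P i then 1 else 0 := by
  split_ifs with h
  · obtain ⟨i, hi⟩ := h
    rw [sum_eq_single i (fun j _ hj => if_neg fun hPj => hj (hP j i hPj hi)) (by simp), if_pos hi]
  · exact sum_eq_zero fun i _ => if_neg fun hi => h ⟨i, hi⟩

section ConeCoords

variable {ι : Type*} (lam alp : ι → ℝ)

/-- With `lam`, `alp` the barycentric coordinates of `y` and of the apex `a`: `y = μ a + z` with
`z` a nonnegative combination of the vertices other than the `i`-th. -/
def MemConeCoords (i : ι) : Prop :=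
  ∃ μ, 0 ≤ μ ∧ lam i = μ * alp i ∧ ∀ j, μ * alp j ≤ lam j

theorem convex_setOf_memConeCoords (i : ι) : Convex ℝ {lam | MemConeCoords lam alp i} := by
  rintro lam ⟨μ, hμ, hi, hle⟩ lam' ⟨μ', hμ', hi', hle'⟩ s t hs ht _
  refine ⟨s * μ + t * μ', by positivity, ?_, fun j => ?_⟩
  · simp only [Pi.add_apply, Pi.smul_apply, smul_eq_mul, hi, hi']
    ring
  · simp only [Pi.add_apply, Pi.smul_apply, smul_eq_mul]
    nlinarith [mul_le_mul_of_nonneg_left (hle j) hs, mul_le_mul_of_nonneg_left (hle' j) ht]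

variable {lam alp}

theorem exists_pos_memConeCoords_iff [Fintype ι] (halp : ∑ j, alp j = 1) :
    (∃ i, 0 < alp i ∧ MemConeCoords lam alp i) ↔ ∃ μ, 0 ≤ μ ∧ ∀ j, μ * alp j ≤ lam j := by
  refine ⟨fun ⟨_, _, μ, hμ, _, hle⟩ => ⟨μ, hμ, hle⟩, fun ⟨μ₀, hμ₀, h⟩ => ?_⟩
  obtain ⟨k, hk⟩ : ∃ k, 0 < alp k := by
    by_contra! hneg
    linarith [sum_nonpos fun j (_ : j ∈ univ) => hneg j]
  obtain ⟨i, hi, hmin⟩ :=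
    (univ.filter fun j => 0 < alp j).exists_min_image (fun j => lam j / alp j) ⟨k, by simpa⟩
  replace hi : 0 < alp i := (mem_filter.1 hi).2
  have hμ₀i : μ₀ ≤ lam i / alp i := (le_div_iff₀ hi).2 (h i)
  refine ⟨i, hi, lam i / alp i, hμ₀.trans hμ₀i, (div_mul_cancel₀ _ hi.ne').symm, fun j => ?_⟩
  rcases le_or_gt (alp j) 0 with hj | hj
  · exact (mul_le_mul_of_nonpos_right hμ₀i hj).trans (h j)
  · exact (le_div_iff₀ hj).1 (hmin j (by simpa))

theorem exists_neg_memConeCoords_iff [Fintype ι] (h0 : ∀ j, lam j ≠ 0) :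
    (∃ i, alp i < 0 ∧ MemConeCoords lam alp i)
      ↔ (∃ μ, 0 ≤ μ ∧ ∀ j, μ * alp j ≤ lam j) ∧ ∃ j, lam j < 0 := by
  constructor
  · rintro ⟨i, hi, μ, hμ, hμi, hle⟩
    exact ⟨⟨μ, hμ, hle⟩, i, (hμi ▸ mul_nonpos_of_nonneg_of_nonpos hμ hi.le).lt_of_ne (h0 i)⟩
  rintro ⟨⟨μ₀, hμ₀, h⟩, k, hk⟩
  have hk' : alp k < 0 := by
    by_contra! hk'
    nlinarith [h k]
  obtain ⟨i, hi, hmax⟩ :=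
    (univ.filter fun j => alp j < 0).exists_max_image (fun j => lam j / alp j) ⟨k, by simpa⟩
  replace hi : alp i < 0 := (mem_filter.1 hi).2
  have hiμ₀ : lam i / alp i ≤ μ₀ := (div_le_iff_of_neg hi).2 (h i)
  refine ⟨i, hi, lam i / alp i, ?_, (div_mul_cancel₀ _ hi.ne).symm, fun j => ?_⟩
  · exact (div_pos_of_neg_of_neg hk hk').le.trans (hmax k (by simpa))
  rcases le_or_gt 0 (alp j) with hj | hj
  · exact (mul_le_mul_of_nonneg_right hiμ₀ hj).trans (h j)
  · exact (div_le_iff_of_neg hj).1 (hmax j (by simpa))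

theorem MemConeCoords.eq
    (hgen : ∀ i j, i ≠ j → alp i ≠ 0 → alp j ≠ 0 → lam i * alp j ≠ lam j * alp i)
    {i i' : ι} (hi : MemConeCoords lam alp i) (hi' : MemConeCoords lam alp i')
    (hsign : 0 < alp i * alp i') : i = i' := by
  obtain ⟨μ, -, hμi, hμ⟩ := hi
  obtain ⟨μ', -, hμi', hμ'⟩ := hi'
  have hμμ' : μ = μ' := by
    have hsq : (μ - μ') ^ 2 * (alp i * alp i') ≤ 0 := by
      nlinarith [mul_nonneg (sub_nonneg.2 (hμi ▸ hμ' i)) (sub_nonneg.2 (hμi' ▸ hμ i'))]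
    nlinarith [nonpos_of_mul_nonpos_left hsq hsign, sq_nonneg (μ - μ')]
  by_contra hne
  exact hgen i i' hne (left_ne_zero_of_mul hsign.ne') (right_ne_zero_of_mul hsign.ne')
    (by rw [hμi, hμi', hμμ']; ring)

open scoped Classical in
theorem sum_sign_mul_ite_memConeCoords [Fintype ι] (halp : ∑ j, alp j = 1) (h0 : ∀ j, lam j ≠ 0)
    (hgen : ∀ i j, i ≠ j → alp i ≠ 0 → alp j ≠ 0 → lam i * alp j ≠ lam j * alp i) :
    ∑ i, Real.sign (alp i) * (if MemConeCoords lam alp i then 1 else 0)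
      = if ∀ j, 0 ≤ lam j then 1 else 0 := by
  rw [sum_congr rfl fun i _ => Real.sign_mul_boole (alp i) (MemConeCoords lam alp i),
    sum_sub_distrib,
    sum_boole_eq_ite_exists fun i i' hi hi' => hi.2.eq hgen hi'.2 (mul_pos hi.1 hi'.1),
    sum_boole_eq_ite_exists fun i i' hi hi' =>
      hi.2.eq hgen hi'.2 (mul_pos_of_neg_of_neg hi.1 hi'.1)]
  simp only [exists_pos_memConeCoords_iff halp, exists_neg_memConeCoords_iff h0]
  by_cases hpos : ∀ j, 0 ≤ lam j
  · simp [hpos, show ∃ μ : ℝ, 0 ≤ μ ∧ ∀ j, μ * alp j ≤ lam j from ⟨0, le_rfl, by simpa using hpos⟩]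
  · simp [hpos, show ∃ j, lam j < 0 by simpa using hpos]

end ConeCoords

theorem AffineBasis.mem_convexHull_insert_iff_memConeCoords {E : Type*} [AddCommGroup E]
    [Module ℝ E] {n : ℕ} (b : AffineBasis (Fin (n + 1)) ℝ E) (a y : E) (i : Fin (n + 1)) :
    y ∈ convexHull ℝ (insert a (Set.range fun c => b (i.succAbove c)))
      ↔ MemConeCoords (fun j => b.coord j y) (fun j => b.coord j a) i := by
  constructor
  · intro hy
    have hsub : insert a (Set.range fun c => b (i.succAbove c))
        ⊆ b.coords ⁻¹' {lam | MemConeCoords lam (fun j => b.coord j a) i} := by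
      rintro _ (rfl | ⟨c, rfl⟩)
      · exact ⟨1, zero_le_one, (one_mul _).symm, fun j => (one_mul _).le⟩
      · refine ⟨0, le_rfl, ?_, fun j => ?_⟩
        · simp [b.coord_apply_ne (i.succAbove_ne c).symm]
        · simp only [AffineBasis.coords_apply, zero_mul, b.coord_apply]
          split_ifs <;> norm_num
    exact convexHull_min hsub ((convex_setOf_memConeCoords _ i).affine_preimage b.coords) hy
  · rintro ⟨μ, hμ, hi, hle⟩
    simp only at hi hle
    have hsum (p : E) : ∑ c, b.coord (i.succAbove c) p = 1 - b.coord i p := by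
      rw [← b.sum_coord_apply_eq_one p, Fin.sum_univ_succAbove _ i, add_sub_cancel_left]
    let w : Fin (n + 1) → ℝ :=
      Fin.cons μ fun c => b.coord (i.succAbove c) y - μ * b.coord (i.succAbove c) a
    refine mem_convexHull_of_exists_fintype w (Fin.cons a fun c => b (i.succAbove c))
      (fun k => ?_) ?_ (fun k => ?_) ?_
    · cases k using Fin.cases with
      | zero => exact hμ
      | succ c => simpa [w] using hle (i.succAbove c)
    · simp only [w, Fin.sum_univ_succ, Fin.cons_zero, Fin.cons_succ, sum_sub_distrib, ← mul_sum,
        hsum]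
      rw [hi]
      ring
    · cases k using Fin.cases with
      | zero => exact Set.mem_insert a _
      | succ c => exact Set.mem_insert_of_mem a ⟨c, rfl⟩
    · conv_rhs => rw [← b.linear_combination_coord_eq_self y, Fin.sum_univ_succAbove _ i]
      rw [Fin.sum_univ_succ, ← b.linear_combination_coord_eq_self a, Fin.sum_univ_succAbove _ i]
      simp only [w, Fin.cons_zero, Fin.cons_succ, smul_add, smul_sum, smul_smul, sub_smul,
        sum_sub_distrib, hi]
      abel

section LiftMatrix

variable {n : ℕ}

def liftMatrix (p : Fin (n + 1) → Fin n → ℝ) : Matrix (Fin (n + 1)) (Fin (n + 1)) ℝ :=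
  Matrix.of fun r => Fin.cons 1 (p r)

theorem det_liftMatrix (p : Fin (n + 1) → Fin n → ℝ) :
    (liftMatrix p).det = (Matrix.of fun r c : Fin n => (p c.succ - p 0) r).det := by
  let B : Matrix (Fin (n + 1)) (Fin (n + 1)) ℝ :=
    Matrix.of fun r => if r = 0 then liftMatrix p 0 else liftMatrix p r - liftMatrix p 0
  have hB : (liftMatrix p).det = B.det := by
    refine Matrix.det_eq_of_forall_row_eq_smul_add_const (fun r => if r = 0 then 0 else 1) 0
      (if_pos rfl) fun r k => ?_
    by_cases hr : r = 0 <;> simp [B, hr]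
  have hB0 (r : Fin (n + 1)) (hr : r ≠ 0) : B r 0 = 0 := by simp [B, hr, liftMatrix]
  have hB0' : B 0 0 = 1 := by simp [B, liftMatrix]
  rw [hB, Matrix.det_succ_column_zero,
    sum_eq_single 0 (fun r _ hr => by rw [hB0 r hr, mul_zero, zero_mul]) (by simp)]
  rw [← Matrix.det_transpose (Matrix.of _), hB0', Fin.val_zero, pow_zero,
    one_mul, one_mul, Fin.succAbove_zero]
  rfl

theorem det_liftMatrix_comp_perm (p : Fin (n + 1) → Fin n → ℝ) (σ : Equiv.Perm (Fin (n + 1))) :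
    (liftMatrix (p ∘ σ)).det = Equiv.Perm.sign σ * (liftMatrix p).det :=
  Matrix.det_permute σ (liftMatrix p)

theorem det_liftMatrix_update_sum (p : Fin (n + 1) → Fin n → ℝ) (i : Fin (n + 1))
    {α : Fin (n + 1) → ℝ} (hα : ∑ j, α j = 1) :
    (liftMatrix (Function.update p i (∑ j, α j • p j))).det = α i * (liftMatrix p).det := by
  have hrow : liftMatrix (Function.update p i (∑ j, α j • p j))
      = (liftMatrix p).updateRow i (∑ j, α j • liftMatrix p j) := by
    ext r k
    by_cases hr : r = i
    · subst hr
      cases k using Fin.cases <;> simp [liftMatrix, hα, Finset.sum_apply]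
    · simp [liftMatrix, hr]
  rw [hrow, Matrix.det_updateRow_sum, smul_eq_mul]

theorem det_coneMatrix (x : Fin (n + 1) → Fin n → ℝ) {α : Fin (n + 1) → ℝ} (hα : ∑ j, α j = 1)
    (i : Fin (n + 1)) :
    (coneMatrix n x (∑ j, α j • x j) i).det
      = (-1) ^ (i : ℕ) * α i * (Matrix.of fun r c : Fin n => (x c.succ - x 0) r).det := by
  -- `B_i` is the edge matrix of `(a, x_0, …, x̂_i, …, x_n)`, a reordering of `x` with `x_i := a`.
  have hcons : (Fin.cons (∑ j, α j • x j) fun c => x (i.succAbove c) : Fin (n + 1) → Fin n → ℝ)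
      = Function.update x i (∑ j, α j • x j) ∘ i.cycleRange.symm := by
    rw [← Fin.insertNth_removeNth, Fin.insertNth_comp_cycleRange_symm]
    rfl
  have hcone : coneMatrix n x (∑ j, α j • x j) i = Matrix.of fun r c : Fin n =>
      ((Fin.cons (∑ j, α j • x j) fun c => x (i.succAbove c) : Fin (n + 1) → Fin n → ℝ) c.succ
        - (Fin.cons (∑ j, α j • x j) fun c => x (i.succAbove c) : Fin (n + 1) → Fin n → ℝ) 0) r :=
    rfl
  rw [hcone, ← det_liftMatrix, hcons, det_liftMatrix_comp_perm, det_liftMatrix_update_sum _ _ hα,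
    det_liftMatrix, Equiv.Perm.sign_symm, Fin.sign_cycleRange]
  push_cast
  ring

end LiftMatrix

theorem exists_affineBasis_of_det_ne_zero {n : ℕ} (x : Fin (n + 1) → Fin n → ℝ)
    (hx : (Matrix.of fun r c : Fin n => (x c.succ - x 0) r).det ≠ 0) :
    ∃ b : AffineBasis (Fin (n + 1)) ℝ (Fin n → ℝ), ⇑b = x := by
  have hspan : Submodule.span ℝ (Set.range fun c : Fin n => x c.succ - x 0) = ⊤ := by
    have hli : LinearIndependent ℝ fun c : Fin n => x c.succ - x 0 :=
      Matrix.linearIndependent_cols_iff_isUnit.2 ((Matrix.isUnit_iff_isUnit_det _).2 hx.isUnit)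
    exact hli.span_eq_top_of_card_eq_finrank' (by simp)
  have hvec : vectorSpan ℝ (Set.range x) = ⊤ := by
    rw [vectorSpan_range_eq_span_range_vsub_right ℝ x 0, eq_top_iff, ← hspan]
    exact Submodule.span_mono (Set.range_subset_iff.2 fun c => ⟨c.succ, rfl⟩)
  have hind : AffineIndependent ℝ x := by
    rw [affineIndependent_iff_le_finrank_vectorSpan ℝ x (Fintype.card_fin _), hvec]
    simp
  exact ⟨⟨x, hind, AffineSubspace.affineSpan_eq_top_iff_vectorSpan_eq_top_of_nonempty ℝ _ _
    (Set.range_nonempty x) |>.2 hvec⟩, rfl⟩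

theorem AffineMap.ae_ne_zero_of_apply_ne_zero {E : Type*} [NormedAddCommGroup E]
    [NormedSpace ℝ E] [MeasurableSpace E] [BorelSpace E] [FiniteDimensional ℝ E] (μ : Measure E)
    [μ.IsAddHaarMeasure] (φ : E →ᵃ[ℝ] ℝ) {p : E} (hp : φ p ≠ 0) : ∀ᵐ y ∂μ, φ y ≠ 0 := by
  have hzero : {y | ¬φ y ≠ 0} = (AffineSubspace.comap φ (affineSpan ℝ {0}) : Set E) := by
    ext y
    simp
  rw [ae_iff, hzero]
  refine Measure.addHaar_affineSubspace μ _ fun htop => hp ?_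
  have hmem : p ∈ AffineSubspace.comap φ (affineSpan ℝ {0}) := htop ▸ AffineSubspace.mem_top ℝ E p
  simpa using hmem

theorem AffineBasis.ae_coord_ne_zero_and_mul_ne {ι E : Type*} [Fintype ι] [NormedAddCommGroup E]
    [NormedSpace ℝ E] [MeasurableSpace E] [BorelSpace E] [FiniteDimensional ℝ E] (μ : Measure E)
    [μ.IsAddHaarMeasure] (b : AffineBasis ι ℝ E) (α : ι → ℝ) :
    ∀ᵐ y ∂μ, (∀ j, b.coord j y ≠ 0)
      ∧ ∀ i j, i ≠ j → α j ≠ 0 → b.coord i y * α j ≠ b.coord j y * α i := by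
  refine (ae_all_iff.2 fun j => ?_).and (ae_all_iff.2 fun i => ae_all_iff.2 fun j => ?_)
  · exact (b.coord j).ae_ne_zero_of_apply_ne_zero μ (p := b j) (by simp)
  · by_cases hij : i ≠ j ∧ α j ≠ 0
    · filter_upwards [(α j • b.coord i - α i • b.coord j).ae_ne_zero_of_apply_ne_zero μ
        (p := b i) (by simp [b.coord_apply_ne hij.1.symm, hij.2])] with y hy _ _
      contrapose! hy
      simp only [AffineMap.coe_sub, AffineMap.coe_smul, Pi.sub_apply, Pi.smul_apply, smul_eq_mul]
      linarith
    · exact Filter.Eventually.of_forall fun y h1 h2 => absurd ⟨h1, h2⟩ hij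

theorem sum_smul_setIntegral_eq_of_ae_sum_indicator {X E ι : Type*} [MeasurableSpace X]
    [NormedAddCommGroup E] [NormedSpace ℝ E] [Fintype ι] {μ : Measure X} {f : X → E}
    (hf : Integrable f μ) (c : ι → ℝ) {S : ι → Set X} {T : Set X} (hS : ∀ i, MeasurableSet (S i))
    (hT : MeasurableSet T)
    (h : ∀ᵐ y ∂μ, ∑ i, c i * (S i).indicator 1 y = T.indicator 1 y) :
    ∑ i, c i • ∫ y in S i, f y ∂μ = ∫ y in T, f y ∂μ := by
  have hind (U : Set X) (y : X) : U.indicator f y = U.indicator (1 : X → ℝ) y • f y := by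
    by_cases hy : y ∈ U <;> simp [hy]
  calc ∑ i, c i • ∫ y in S i, f y ∂μ = ∫ y, ∑ i, c i • (S i).indicator f y ∂μ := by
        rw [integral_finsetSum (f := fun i y => c i • (S i).indicator f y) univ
          fun i _ => (hf.indicator (hS i)).smul (c i)]
        simp only [integral_smul, integral_indicator (hS _)]
    _ = ∫ y, T.indicator f y ∂μ := by
        refine integral_congr_ae (h.mono fun y hy => ?_)
        simp only [hind, smul_smul, ← sum_smul, hy]
    _ = ∫ y in T, f y ∂μ := integral_indicator hT

/-- for a positively oriented simplex `T = [x_0,…,x_n]` and any apex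
`a`, the signed sum of the integrals of an integrable function over the simplicial
cones `T_i = [a, x_0,…,x̂_i,…,x_n]` equals the integral over `T`. -/
theorem stmt14 (n : ℕ) (x : Fin (n + 1) → (Fin n → ℝ)) (a : Fin n → ℝ)
    (hdet : 0 < (Matrix.of fun r c : Fin n => (x c.succ - x 0) r).det)
    (f : (Fin n → ℝ) → ℝ) (hf : Integrable f) :
    ∑ i : Fin (n + 1),
        (-1 : ℝ) ^ (i : ℕ) * Real.sign (coneMatrix n x a i).det
          * ∫ y in convexHull ℝ (insert a (Set.range fun c : Fin n => x (i.succAbove c))), f y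
      = ∫ y in convexHull ℝ (Set.range x), f y := by
  classical
  obtain ⟨b, rfl⟩ := exists_affineBasis_of_det_ne_zero x hdet.ne'
  have hα := b.sum_coord_apply_eq_one a
  have hsign (i : Fin (n + 1)) :
      (-1) ^ (i : ℕ) * Real.sign (coneMatrix n b a i).det = Real.sign (b.coord i a) := by
    conv_lhs => rw [← b.linear_combination_coord_eq_self a]
    rw [det_coneMatrix _ hα, Real.sign_mul_of_pos hdet,
      Real.neg_one_pow_mul_sign_neg_one_pow_mul]
  refine sum_smul_setIntegral_eq_of_ae_sum_indicator hf _
    (fun i => (((Set.finite_range _).insert a).isCompact_convexHull ℝ).isClosed.measurableSet)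
    ((Set.finite_range b).isCompact_convexHull ℝ).isClosed.measurableSet ?_
  filter_upwards [b.ae_coord_ne_zero_and_mul_ne volume fun j => b.coord j a] with y ⟨h0, hgen⟩
  simp only [hsign, Set.indicator_apply, Pi.one_apply, b.mem_convexHull_insert_iff_memConeCoords,
    b.convexHull_eq_nonneg_coord, Set.mem_ofPred_eq]
  -- `convert` only reconciles the `Decidable` instances of the two sides.
  convert sum_sign_mul_ite_memConeCoords hα h0 fun i j hij _ hj => hgen i j hij hj
end
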